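/- Let h ∈ ℓ¹(ℤ) ∩ ℓ²(ℤ) with Z-transform H satisfying ess sup_{ω} |H(e^{iω})| = κ < ∞. Let x_0, η ∈ ℓ²(ℤ) and x = x_0 + η, with Z-transforms X_0 and N respectively, where N ∈ L¹(−π,π) with ∫_{−π}^{π} |N(e^{iω})| dω = σ, and suppose (1/2π)∫_{−π}^{π} |(H(e^{iω}) − 1)X_0(e^{iω})| dω ≤ ε and (H−1)X_0 ∈ L¹(−π,π). Then the estimate x̂ = h∘x satisfies sup_{t∈ℤ} |x̂(t) − x(t)| ≤ ε + (σ/(2π))(κ + 1). -/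

import Mathlib

/-!
On the Fourier side the error `x̂ - x` is `(H - 1) (X₀ + N)`. Since `h ∈ ℓ¹`, its series `H`
converges absolutely and uniformly, so Fubini lets the convolution sum pass under the inversion
integral: `(h ∘ x)(t) = (1/2π) ∫ H (X₀ + N) e^{iωt}`. The error is then bounded by
`(1/2π) ∫ |(H - 1) X₀| + (1/2π) ∫ |H - 1| |N|`, and `|H - 1| ≤ κ + 1` almost everywhere.
-/

open MeasureTheory Real Filter NNReal ENNReal

noncomputable section

/-- Convolution of two sequences: `(h ∘ x)(t) = Σ_{s ∈ ℤ} h(t - s) x(s)`. -/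
def conv (h x : ℤ → ℂ) (τ : ℤ) : ℂ := ∑' s : ℤ, h (τ - s) * x s

/-- `X` is (a representative of) the Z-transform of `x ∈ ℓ²(ℤ)`: `X ∈ L²((-π, π])` and
the Fourier coefficients of `X` are the values of `x`. -/
def IsZTransform (x : ℤ → ℂ) (X : ℝ → ℂ) : Prop :=
  MemLp X 2 (volume.restrict (Set.Ioc (-π) π)) ∧
  ∀ τ : ℤ, x τ =
    ((1 / (2 * π) : ℝ) : ℂ) * ∫ ω in (-π)..π, X ω * Complex.exp (Complex.I * ω * τ)

lemma norm_exp_I_mul_mul_intCast (ω : ℝ) (s : ℤ) : ‖Complex.exp (Complex.I * ω * s)‖ = 1 := by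
  simp [Complex.norm_exp, Complex.mul_re]

lemma MeasureTheory.Integrable.mul_exp_I_mul_mul_intCast {μ : Measure ℝ} {f : ℝ → ℂ}
    (hf : Integrable f μ) (s : ℤ) : Integrable (fun ω => f ω * Complex.exp (Complex.I * ω * s)) μ :=
  hf.mul_bdd (by fun_prop) (.of_forall fun ω => (norm_exp_I_mul_mul_intCast ω s).le)

lemma norm_integral_mul_exp_I_mul_mul_intCast_le {μ : Measure ℝ} (f : ℝ → ℂ) (s : ℤ) :
    ‖∫ ω, f ω * Complex.exp (Complex.I * ω * s) ∂μ‖ ≤ ∫ ω, ‖f ω‖ ∂μ := by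
  simpa only [norm_mul, norm_exp_I_mul_mul_intCast, mul_one] using
    norm_integral_le_integral_norm (μ := μ) fun ω => f ω * Complex.exp (Complex.I * ω * s)

lemma continuous_tsum_mul_exp_neg_I {h : ℤ → ℂ} (hh : Summable (‖h ·‖)) :
    Continuous fun ω : ℝ => ∑' u : ℤ, h u * Complex.exp (-(Complex.I * ω * u)) := by
  refine continuous_tsum (fun u => by fun_prop) hh fun u ω => ?_
  simp [Complex.norm_exp, Complex.mul_re]

lemma tsum_sub_mul_exp_I (h : ℤ → ℂ) (ω : ℝ) (τ : ℤ) :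
    ∑' s : ℤ, h (τ - s) * Complex.exp (Complex.I * ω * s)
      = (∑' u : ℤ, h u * Complex.exp (-(Complex.I * ω * u))) * Complex.exp (Complex.I * ω * τ) := by
  rw [← (Equiv.subLeft τ).tsum_eq]
  refine Eq.trans (tsum_congr fun u => ?_) tsum_mul_right
  rw [Equiv.subLeft_apply, Int.sub_sub_self, Int.cast_sub, mul_sub, Complex.exp_sub,
    Complex.exp_neg]
  ring

lemma conv_eq_integral_mul {h : ℤ → ℂ} (hh : Summable (‖h ·‖)) {H : ℝ → ℂ}
    (hH : ∀ ω : ℝ, H ω = ∑' u : ℤ, h u * Complex.exp (-(Complex.I * ω * u)))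
    {μ : Measure ℝ} {Y : ℝ → ℂ} (hY : Integrable Y μ) {x : ℤ → ℂ} {c : ℂ}
    (hx : ∀ s : ℤ, x s = c * ∫ ω, Y ω * Complex.exp (Complex.I * ω * s) ∂μ) (τ : ℤ) :
    conv h x τ = c * ∫ ω, H ω * (Y ω * Complex.exp (Complex.I * ω * τ)) ∂μ := by
  set F : ℤ → ℝ → ℂ := fun s ω => h (τ - s) * (Y ω * Complex.exp (Complex.I * ω * s))
  have hF_int : ∀ s, Integrable (F s) μ := fun s => (hY.mul_exp_I_mul_mul_intCast s).const_mul _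
  have hF_sum : Summable fun s => ∫ ω, ‖F s ω‖ ∂μ := by
    simp only [F, norm_mul, norm_exp_I_mul_mul_intCast, mul_one, integral_const_mul]
    exact ((Equiv.subLeft τ).summable_iff.mpr hh).mul_right _
  calc conv h x τ = c * ∑' s, ∫ ω, F s ω ∂μ := by
        rw [conv, ← _root_.tsum_mul_left]
        exact tsum_congr fun s => by rw [hx, integral_const_mul]; ring
    _ = c * ∫ ω, ∑' s, F s ω ∂μ := by rw [integral_tsum_of_summable_integral_norm hF_int hF_sum]
    _ = c * ∫ ω, H ω * (Y ω * Complex.exp (Complex.I * ω * τ)) ∂μ := by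
        refine congrArg _ (integral_congr_ae (.of_forall fun ω => ?_))
        simp only [F, mul_left_comm (h _) (Y ω)]
        rw [_root_.tsum_mul_left, tsum_sub_mul_exp_I, ← hH, mul_left_comm]

lemma conv_sub_eq_integral_sub_one_mul {h : ℤ → ℂ} (hh : Summable (‖h ·‖)) {H : ℝ → ℂ}
    (hH : ∀ ω : ℝ, H ω = ∑' u : ℤ, h u * Complex.exp (-(Complex.I * ω * u)))
    {μ : Measure ℝ} {κ : ℝ} (hH_le : ∀ᵐ ω ∂μ, ‖H ω‖ ≤ κ) {Y : ℝ → ℂ} (hY : Integrable Y μ)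
    {x : ℤ → ℂ} {c : ℂ}
    (hx : ∀ s : ℤ, x s = c * ∫ ω, Y ω * Complex.exp (Complex.I * ω * s) ∂μ) (τ : ℤ) :
    conv h x τ - x τ = c * ∫ ω, (H ω - 1) * Y ω * Complex.exp (Complex.I * ω * τ) ∂μ := by
  have hH_cont : Continuous H := (continuous_tsum_mul_exp_neg_I hh).congr fun ω => (hH ω).symm
  have hYe := hY.mul_exp_I_mul_mul_intCast τ
  rw [conv_eq_integral_mul hh hH hY hx, hx τ, ← mul_sub,
    ← integral_sub (hYe.bdd_mul hH_cont.aestronglyMeasurable hH_le) hYe]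
  exact congrArg _ (integral_congr_ae (.of_forall fun ω => by ring))

lemma add_eq_setIntegral_add_mul_exp {a b : ℝ} (hab : a ≤ b) {x y : ℤ → ℂ} {X Y : ℝ → ℂ}
    {c : ℂ} (hX : IntegrableOn X (Set.Ioc a b)) (hY : IntegrableOn Y (Set.Ioc a b))
    (hx : ∀ s : ℤ, x s = c * ∫ ω in a..b, X ω * Complex.exp (Complex.I * ω * s))
    (hy : ∀ s : ℤ, y s = c * ∫ ω in a..b, Y ω * Complex.exp (Complex.I * ω * s)) (s : ℤ) :
    x s + y s = c * ∫ ω in Set.Ioc a b, (X ω + Y ω) * Complex.exp (Complex.I * ω * s) := by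
  rw [hx, hy, intervalIntegral.integral_of_le hab, intervalIntegral.integral_of_le hab, ← mul_add,
    ← integral_add (hX.mul_exp_I_mul_mul_intCast s) (hY.mul_exp_I_mul_mul_intCast s)]
  simp only [add_mul]

lemma ae_norm_le_of_essSup_le_ofReal {α E : Type*} [MeasurableSpace α] [SeminormedAddGroup E]
    {μ : Measure α} {f : α → E} {κ : ℝ} (hκ0 : 0 ≤ κ)
    (hf : essSup (fun a => (‖f a‖₊ : ℝ≥0∞)) μ ≤ ENNReal.ofReal κ) : ∀ᵐ a ∂μ, ‖f a‖ ≤ κ := by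
  filter_upwards [ENNReal.ae_le_essSup fun a => (‖f a‖₊ : ℝ≥0∞)] with a ha
  rw [← ENNReal.ofReal_le_ofReal_iff hκ0, ofReal_norm]
  exact ha.trans hf

lemma integral_norm_sub_one_mul_add_le {α : Type*} [MeasurableSpace α] {μ : Measure α}
    {H X N : α → ℂ} {κ : ℝ} (hH : ∀ᵐ a ∂μ, ‖H a‖ ≤ κ)
    (hX : Integrable (fun a => (H a - 1) * X a) μ) (hN : Integrable N μ) :
    ∫ a, ‖(H a - 1) * (X a + N a)‖ ∂μ
      ≤ ∫ a, ‖(H a - 1) * X a‖ ∂μ + (κ + 1) * ∫ a, ‖N a‖ ∂μ := by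
  rw [← integral_const_mul, ← integral_add hX.norm (hN.norm.const_mul _)]
  refine integral_mono_of_nonneg (.of_forall fun a => norm_nonneg _)
    (hX.norm.add (hN.norm.const_mul _)) ?_
  filter_upwards [hH] with a ha
  rw [mul_add]
  refine (norm_add_le _ _).trans (add_le_add_right ?_ _)
  rw [norm_mul]
  gcongr
  exact (norm_sub_le _ _).trans (by rw [norm_one]; linarith)

theorem recovery_robust_to_noise_general (h : ℤ → ℂ) (hh1 : Memℓp h 1)
    (H : ℝ → ℂ)
    (hH : ∀ ω : ℝ, H ω = ∑' τ : ℤ, h τ * Complex.exp (-(Complex.I * ω * τ)))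
    (κ : ℝ) (hκ0 : 0 ≤ κ)
    (hκ : essSup (fun ω => (‖H ω‖₊ : ℝ≥0∞)) (volume.restrict (Set.Ioc (-π) π))
      = ENNReal.ofReal κ)
    (x₀ η : ℤ → ℂ)
    (X₀ : ℝ → ℂ) (hX₀ : IsZTransform x₀ X₀)
    (N : ℝ → ℂ)
    (hN1 : Integrable N (volume.restrict (Set.Ioc (-π) π)))
    (hNcoef : ∀ τ : ℤ, η τ =
      ((1 / (2 * π) : ℝ) : ℂ) * ∫ ω in (-π)..π, N ω * Complex.exp (Complex.I * ω * τ))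
    (σ : ℝ) (hσ : (∫ ω in Set.Ioc (-π) π, ‖N ω‖) = σ)
    (ε : ℝ)
    (hint : Integrable (fun ω => (H ω - 1) * X₀ ω) (volume.restrict (Set.Ioc (-π) π)))
    (hε : (1 / (2 * π)) * ∫ ω in Set.Ioc (-π) π, ‖(H ω - 1) * X₀ ω‖ ≤ ε) :
    ∀ τ : ℤ, ‖conv h (fun s => x₀ s + η s) τ - (x₀ τ + η τ)‖
      ≤ ε + σ / (2 * π) * (κ + 1) := by
  intro τ
  have hh : Summable (‖h ·‖) := by simpa using hh1.summable (by norm_num)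
  have hH_le := ae_norm_le_of_essSup_le_ofReal hκ0 hκ.le
  have hX₀_int : IntegrableOn X₀ (Set.Ioc (-π) π) := hX₀.1.integrable one_le_two
  have hx := add_eq_setIntegral_add_mul_exp (by linarith [Real.pi_pos]) hX₀_int hN1 hX₀.2 hNcoef
  calc ‖conv h (fun s => x₀ s + η s) τ - (x₀ τ + η τ)‖
      ≤ 1 / (2 * π) * ∫ ω in Set.Ioc (-π) π, ‖(H ω - 1) * (X₀ ω + N ω)‖ := by
        rw [conv_sub_eq_integral_sub_one_mul hh hH hH_le (hX₀_int.add hN1) hx, norm_mul,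
          Complex.norm_real, norm_of_nonneg (by positivity)]
        gcongr
        exact norm_integral_mul_exp_I_mul_mul_intCast_le _ τ
    _ ≤ 1 / (2 * π) * ((∫ ω in Set.Ioc (-π) π, ‖(H ω - 1) * X₀ ω‖) + (κ + 1) * σ) := by
        gcongr
        exact hσ ▸ integral_norm_sub_one_mul_add_le hH_le hint hN1
    _ = (1 / (2 * π) * ∫ ω in Set.Ioc (-π) π, ‖(H ω - 1) * X₀ ω‖) + σ / (2 * π) * (κ + 1) := by
        ring
    _ ≤ ε + σ / (2 * π) * (κ + 1) := by gcongr

/-- Robustness with respect to noise contamination: if `h ∈ ℓ¹ ∩ ℓ²` has Z-transform `H`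
with `ess sup |H| = κ < ∞`, and `x = x₀ + η` where the Z-transform `N` of the noise `η`
satisfies `∫|N| = σ`, while `(1/2π)∫|(H-1)X₀| ≤ ε`, then the estimate `x̂ = h ∘ x`
satisfies `sup_t |x̂(t) - x(t)| ≤ ε + (σ/(2π))(κ+1)`. -/
theorem recovery_robust_to_noise (h : ℤ → ℂ) (hh1 : Memℓp h 1) (hh2 : Memℓp h 2)
    (H : ℝ → ℂ)
    (hH : ∀ ω : ℝ, H ω = ∑' τ : ℤ, h τ * Complex.exp (-(Complex.I * ω * τ)))
    (κ : ℝ) (hκ0 : 0 ≤ κ)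
    (hκ : essSup (fun ω => (‖H ω‖₊ : ℝ≥0∞)) (volume.restrict (Set.Ioc (-π) π))
      = ENNReal.ofReal κ)
    (x₀ η : ℤ → ℂ) (hx₀ : Memℓp x₀ 2) (hη : Memℓp η 2)
    (X₀ : ℝ → ℂ) (hX₀ : IsZTransform x₀ X₀)
    (N : ℝ → ℂ)
    (hN1 : Integrable N (volume.restrict (Set.Ioc (-π) π)))
    (hNcoef : ∀ τ : ℤ, η τ =
      ((1 / (2 * π) : ℝ) : ℂ) * ∫ ω in (-π)..π, N ω * Complex.exp (Complex.I * ω * τ))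
    (σ : ℝ) (hσ : (∫ ω in Set.Ioc (-π) π, ‖N ω‖) = σ)
    (ε : ℝ)
    (hint : Integrable (fun ω => (H ω - 1) * X₀ ω) (volume.restrict (Set.Ioc (-π) π)))
    (hε : (1 / (2 * π)) * ∫ ω in Set.Ioc (-π) π, ‖(H ω - 1) * X₀ ω‖ ≤ ε) :
    ∀ τ : ℤ, ‖conv h (fun s => x₀ s + η s) τ - (x₀ τ + η τ)‖
      ≤ ε + σ / (2 * π) * (κ + 1) :=
  recovery_robust_to_noise_general h hh1 H hH κ hκ0 hκ x₀ η X₀ hX₀ N hN1 hNcoef σ hσ ε hint hε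

end
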